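/- arXiv:1304.6832 — 3 statements merged into one kernel-verified Lean document; each statement's English description precedes it below -/
import Mathlib

section
/- The min-rank of a finite simple graph equals the sum of the min-ranks of its connected components. -/
open scoped Classical

/-- A matrix `M` fits the graph `G` if its diagonal entries are nonzero and its
entries at distinct non-adjacent pairs of vertices are zero. -/
def Fits {V F : Type} [Fintype V] [Field F]
    (G : SimpleGraph V) (M : Matrix V V F) : Prop :=
  (∀ u, M u u ≠ 0) ∧ ∀ u v, u ≠ v → ¬ G.Adj u v → M u v = 0

/-- The min-rank of `G` over the field `F`: the minimum rank of a matrix fitting `G`. -/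
noncomputable def minrk (F : Type) [Field F] {V : Type} [Fintype V]
    (G : SimpleGraph V) : ℕ :=
  sInf {r : ℕ | ∃ M : Matrix V V F, Fits G M ∧ M.rank = r}

section Aux

variable {F : Type} [Field F]

noncomputable def piSubmoduleEquiv {ι : Type} {φ : ι → Type}
    [∀ i, AddCommGroup (φ i)] [∀ i, Module F (φ i)] (p : ∀ i, Submodule F (φ i)) :
    (Submodule.pi Set.univ p) ≃ₗ[F] ∀ i, p i where
  toFun x := fun i => ⟨x.1 i, x.2 i (Set.mem_univ i)⟩
  map_add' x y := rfl
  map_smul' c x := rfl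
  invFun y := ⟨fun i => (y i).1, fun i ↦ fun _ => (y i).2⟩
  left_inv x := rfl
  right_inv y := rfl

lemma finrank_pi_submodule {ι : Type} [Fintype ι] {φ : ι → Type}
    [∀ i, AddCommGroup (φ i)] [∀ i, Module F (φ i)]
    [∀ i, Module.Finite F (φ i)] (p : ∀ i, Submodule F (φ i)) :
    Module.finrank F (Submodule.pi Set.univ p) = ∑ i, Module.finrank F (p i) := by
  rw [(piSubmoduleEquiv p).finrank_eq, Module.finrank_pi_fintype]

lemma rank_blockDiagonal' {ι : Type} [Fintype ι] [DecidableEq ι] {n : ι → Type}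
    [∀ i, Fintype (n i)] [∀ i, DecidableEq (n i)]
    (M : ∀ i, Matrix (n i) (n i) F) :
    (Matrix.blockDiagonal' M).rank = ∑ i, (M i).rank := by
  classical
  let e := LinearEquiv.piCurry F (fun (i : ι) (_ : n i) => F)
  let g : (∀ i, n i → F) →ₗ[F] (∀ i, n i → F) :=
    LinearMap.pi fun i => (M i).mulVecLin ∘ₗ LinearMap.proj i
  have key : (Matrix.blockDiagonal' M).mulVecLin
      = (e.symm.toLinearMap ∘ₗ g) ∘ₗ e.toLinearMap := by
    apply LinearMap.ext; intro x
    funext ik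
    obtain ⟨i, k⟩ := ik
    show Matrix.mulVec (Matrix.blockDiagonal' M) x ⟨i, k⟩ = _
    have hrhs : ((e.symm.toLinearMap ∘ₗ g) ∘ₗ e.toLinearMap) x ⟨i, k⟩
        = ∑ l, M i k l * x ⟨i, l⟩ := by
      show Sigma.uncurry (g (Sigma.curry x)) ⟨i, k⟩ = _
      simp [Sigma.uncurry, Sigma.curry, g, Matrix.mulVecLin_apply, Matrix.mulVec,
        dotProduct]
    rw [hrhs, Matrix.mulVec, dotProduct, ← Finset.univ_sigma_univ, Finset.sum_sigma]
    rw [Finset.sum_eq_single i]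
    · simp [Matrix.blockDiagonal'_apply_eq]
    · intro j _ hj
      apply Finset.sum_eq_zero
      intro l _
      rw [Matrix.blockDiagonal'_apply_ne _ _ _ hj.symm, zero_mul]
    · intro h; exact absurd (Finset.mem_univ i) h
  have hrange : LinearMap.range g
      = Submodule.pi Set.univ (fun i => LinearMap.range (M i).mulVecLin) := by
    ext y
    simp only [LinearMap.mem_range, Submodule.mem_pi, Set.mem_univ, forall_true_left]
    constructor
    · rintro ⟨x, rfl⟩ i
      exact ⟨x i, rfl⟩
    · intro h
      choose x hx using h
      exact ⟨x, funext fun i => hx i⟩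
  rw [Matrix.rank, key,
    LinearMap.range_comp_of_range_eq_top _ (LinearEquiv.range e),
    LinearMap.range_comp, LinearEquiv.finrank_map_eq, hrange, finrank_pi_submodule]
  rfl

end Aux

lemma fits_one {V : Type} [Fintype V] {F : Type} [Field F] (G : SimpleGraph V) :
    Fits G (1 : Matrix V V F) :=
  ⟨fun u => by simp [Matrix.one_apply_eq], fun u v huv _ => Matrix.one_apply_ne huv⟩

lemma minrk_mem {V F : Type} [Fintype V] [Field F] (G : SimpleGraph V) :
    minrk F G ∈ {r : ℕ | ∃ M : Matrix V V F, Fits G M ∧ M.rank = r} :=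
  Nat.sInf_mem ⟨_, 1, fits_one G, rfl⟩

theorem minrk_eq_sum_connectedComponents {V F : Type} [Fintype V] [Field F] [Fintype F]
    (G : SimpleGraph V) :
    minrk F G = ∑ᶠ c : G.ConnectedComponent, minrk F (G.induce c.supp) := by
  classical
  rw [finsum_eq_sum_of_fintype]
  let e : (Σ c : G.ConnectedComponent, c.supp) ≃ V :=
    (Equiv.sigmaCongrRight fun c => Equiv.subtypeEquivRight fun v =>
      SimpleGraph.ConnectedComponent.mem_supp_iff c v).trans
      (Equiv.sigmaFiberEquiv G.connectedComponentMk)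
  have he : ∀ (c : G.ConnectedComponent) (i : c.supp), e ⟨c, i⟩ = (i : V) := fun c i => rfl
  have hcomp : ∀ (c : G.ConnectedComponent) (i : c.supp), G.connectedComponentMk i = c :=
    fun c i => (SimpleGraph.ConnectedComponent.mem_supp_iff c i).mp i.2
  apply le_antisymm
  · -- build block matrix from minimizers
    have hN : ∀ c : G.ConnectedComponent, ∃ N : Matrix c.supp c.supp F,
        Fits (G.induce c.supp) N ∧ N.rank = minrk F (G.induce c.supp) :=
      fun c => minrk_mem _
    choose N hNfits hNrank using hN
    let M : Matrix V V F := (Matrix.blockDiagonal' N).submatrix e.symm e.symm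
    have hMfits : Fits G M := by
      constructor
      · intro u
        rcases h : e.symm u with ⟨c, i⟩
        show Matrix.blockDiagonal' N (e.symm u) (e.symm u) ≠ 0
        rw [h, Matrix.blockDiagonal'_apply_eq]
        exact (hNfits c).1 i
      · intro u v huv hadj
        rcases hu : e.symm u with ⟨c, i⟩
        rcases hv : e.symm v with ⟨d, j⟩
        have hui : u = (i : V) := by rw [← he c i, ← hu, Equiv.apply_symm_apply]
        have hvj : v = (j : V) := by rw [← he d j, ← hv, Equiv.apply_symm_apply]
        show Matrix.blockDiagonal' N (e.symm u) (e.symm v) = 0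
        rw [hu, hv]
        by_cases hcd : c = d
        · subst hcd
          rw [Matrix.blockDiagonal'_apply_eq]
          refine (hNfits c).2 i j ?_ ?_
          · intro hij; exact huv (by rw [hui, hvj, hij])
          · intro h
            exact hadj (by rw [hui, hvj]; exact h)
        · exact Matrix.blockDiagonal'_apply_ne _ _ _ hcd
    have hMrank : M.rank = ∑ c : G.ConnectedComponent, minrk F (G.induce c.supp) := by
      have : M.rank = (Matrix.blockDiagonal' N).rank :=
        Matrix.rank_submatrix _ e.symm e.symm
      rw [this, rank_blockDiagonal']
      exact Finset.sum_congr rfl fun c _ => hNrank c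
    exact Nat.sInf_le ⟨M, hMfits, hMrank⟩
  · -- any minimizer of G decomposes
    obtain ⟨M, hMfits, hMrank⟩ := minrk_mem (F := F) G
    let N : ∀ c : G.ConnectedComponent, Matrix c.supp c.supp F :=
      fun (c : G.ConnectedComponent) => M.submatrix (fun i : c.supp => (i : V)) (fun i : c.supp => (i : V))
    have hblock : M.submatrix e e = Matrix.blockDiagonal' N := by
      ext ⟨c, i⟩ ⟨d, j⟩
      by_cases hcd : c = d
      · subst hcd
        rw [Matrix.blockDiagonal'_apply_eq]
        rfl
      · rw [Matrix.blockDiagonal'_apply_ne _ _ _ hcd, Matrix.submatrix_apply, he, he]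
        refine hMfits.2 _ _ ?_ ?_
        · intro hij
          exact hcd (by rw [← hcomp c i, ← hcomp d j, hij])
        · intro h
          exact hcd ((hcomp c i).symm.trans
            ((SimpleGraph.ConnectedComponent.sound h.reachable).trans (hcomp d j)))
    have hNfits : ∀ c, Fits (G.induce c.supp) (N c) := by
      intro c
      constructor
      · intro i; exact hMfits.1 i
      · intro i j hij hadj
        refine hMfits.2 i j (fun h => hij (Subtype.ext h)) (fun h => hadj ?_)
        exact h
    have : M.rank = ∑ c, (N c).rank := by
      rw [← Matrix.rank_submatrix M e e, hblock, rank_blockDiagonal']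
    rw [← hMrank, this]
    exact Finset.sum_le_sum fun c _ => Nat.sInf_le ⟨N c, hNfits c, rfl⟩
end

section
/- Let G be a connected graph with a simple tree structure (Γ = [V_1,…,V_k], T): each s_G(V_i,V_j) ∈ {0,1} for i ≠ j, and T (the quotient graph on [k] with edges where s_G(V_i,V_j)=1) is a tree. Suppose A is a connected induced subgraph of G whose vertex set is not contained in any single part V_i. Then A has a bridge. -/
open scoped Classical

/-- `sG G U W` is the number of edges of `G` with one endpoint in `U` and the other in `W`. -/
noncomputable def sG {V : Type} (G : SimpleGraph V) (U W : Set V) : ℕ :=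
  Set.ncard {e : Sym2 V | e ∈ G.edgeSet ∧ ∃ a ∈ U, ∃ b ∈ W, e = s(a, b)}

/-!
Let `part v` be the index of a part containing `v`. Since `A` is connected and meets two parts,
some edge `xy` of `A` joins different parts `i ≠ j`; then `ij` is an edge, hence a bridge, of the
tree `T`. Every edge of `G` other than `xy` either stays inside a part or projects to an edge of
`T` other than `ij` (there is only one edge between `P i` and `P j`), so a path from `x` to `y`
avoiding `xy` would project to a walk from `i` to `j` in `T` avoiding `ij`. Hence `xy` is a bridge
of `G`, and a fortiori of the induced subgraph on `A`.
-/

namespace SimpleGraph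

variable {V W : Type*} {G : SimpleGraph V} {H : SimpleGraph W}

theorem IsBridge.comap (f : H ↪g G) {x y : W} (h : G.IsBridge s(f x, f y)) :
    H.IsBridge s(x, y) := by
  rw [isBridge_iff] at h ⊢
  refine fun hr => h (hr.map ⟨f, fun {a b} hab => ?_⟩)
  rw [deleteEdges_adj] at hab ⊢
  exact ⟨f.map_adj_iff.2 hab.1, fun he => hab.2 <|
    Sym2.map.injective f.injective (Set.mem_singleton_iff.1 he)⟩

theorem Reachable.map_of_adj_of_ne (f : V → W)
    (hf : ∀ p q, G.Adj p q → f p ≠ f q → H.Adj (f p) (f q)) {u v : V} (h : G.Reachable u v) :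
    H.Reachable (f u) (f v) := by
  obtain ⟨w⟩ := h
  induction w with
  | nil => rfl
  | @cons a b _ hab _ ih =>
    by_cases hfab : f a = f b
    · exact hfab ▸ ih
    · exact (hf a b hab hfab).reachable.trans ih

theorem Preconnected.apply_eq_of_forall_adj (hG : G.Preconnected) (f : V → W)
    (hf : ∀ p q, G.Adj p q → f p = f q) (u v : V) : f u = f v :=
  reachable_bot.1 <|
    (hG u v).map_of_adj_of_ne (H := ⊥) f fun p q hpq hne => (hne (hf p q hpq)).elim

theorem isBridge_of_isBridge_map (f : V → W)
    (hf : ∀ p q, G.Adj p q → f p ≠ f q → H.Adj (f p) (f q)) {u v : V}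
    (huniq : ∀ p q, G.Adj p q → f p = f u → f q = f v → s(p, q) = s(u, v))
    (hbr : H.IsBridge s(f u, f v)) : G.IsBridge s(u, v) := by
  rw [isBridge_iff] at hbr ⊢
  refine fun hr => hbr (hr.map_of_adj_of_ne f fun p q hpq hne => ?_)
  rw [deleteEdges_adj] at hpq ⊢
  refine ⟨hf p q hpq.1 hne, fun he => hpq.2 (Set.mem_singleton_iff.2 ?_)⟩
  rcases Sym2.eq_iff.1 (Set.mem_singleton_iff.1 he) with ⟨hp, hq⟩ | ⟨hp, hq⟩
  · exact huniq p q hpq.1 hp hq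
  · rw [Sym2.eq_swap]; exact huniq q p hpq.1.symm hq hp

end SimpleGraph

section CrossingEdges

variable {V : Type} [Finite V] {G : SimpleGraph V} {U W : Set V} {a b c d : V}

theorem sG_pos_of_adj (hab : G.Adj a b) (ha : a ∈ U) (hb : b ∈ W) : 0 < sG G U W :=
  (Set.ncard_pos (Set.toFinite _)).2 ⟨s(a, b), hab, a, ha, b, hb, rfl⟩

theorem eq_of_sG_le_one (h : sG G U W ≤ 1) (hab : G.Adj a b) (ha : a ∈ U) (hb : b ∈ W)
    (hcd : G.Adj c d) (hc : c ∈ U) (hd : d ∈ W) : s(a, b) = s(c, d) :=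
  (Set.ncard_le_one (Set.toFinite _)).1 h _ ⟨hab, a, ha, b, hb, rfl⟩ _ ⟨hcd, c, hc, d, hd, rfl⟩

end CrossingEdges

theorem bridge_of_not_in_one_part_general {V : Type} [Fintype V] (G : SimpleGraph V)
    (k : ℕ) (P : Fin k → Set V)
    (hcover : (⋃ i, P i) = Set.univ)
    (hs : ∀ i j, i ≠ j → sG G (P i) (P j) ≤ 1)
    (htree : (SimpleGraph.fromRel (fun i j => sG G (P i) (P j) = 1)).IsTree)
    (A : Set V) (hA : (G.induce A).Connected)
    (hnot : ¬ ∃ i, A ⊆ P i) :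
    ∃ e, (G.induce A).IsBridge e := by
  choose part hpart using fun v => Set.mem_iUnion.1 (hcover ▸ Set.mem_univ v)
  set T := SimpleGraph.fromRel (fun i j => sG G (P i) (P j) = 1)
  have hT : ∀ p q, G.Adj p q → part p ≠ part q → T.Adj (part p) (part q) := fun p q hpq hne =>
    (SimpleGraph.fromRel_adj _ _ _).2
      ⟨hne, .inl (le_antisymm (hs _ _ hne) (sG_pos_of_adj hpq (hpart p) (hpart q)))⟩
  obtain ⟨x, y, hxy, hne⟩ : ∃ x y : A, G.Adj x y ∧ part x ≠ part y := by
    by_contra! hconst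
    obtain ⟨a⟩ := hA.nonempty
    exact hnot ⟨part a, fun b hb =>
      hA.preconnected.apply_eq_of_forall_adj (fun z : A => part z) hconst a ⟨b, hb⟩ ▸ hpart b⟩
  refine ⟨s(x, y), .comap (SimpleGraph.Embedding.induce A) ?_⟩
  refine SimpleGraph.isBridge_of_isBridge_map part hT (fun p q hpq hp hq => ?_)
    (SimpleGraph.isAcyclic_iff_forall_isBridge.1 htree.2 (hT _ _ hxy hne))
  exact eq_of_sG_le_one (hs _ _ hne) hpq (hp ▸ hpart p) (hq ▸ hpart q) hxy (hpart x) (hpart y)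

theorem bridge_of_not_in_one_part {V : Type} [Fintype V] (G : SimpleGraph V)
    (hG : G.Connected) (k : ℕ) (P : Fin k → Set V)
    (hdisj : ∀ i j, i ≠ j → Disjoint (P i) (P j))
    (hcover : (⋃ i, P i) = Set.univ)
    (hs : ∀ i j, i ≠ j → sG G (P i) (P j) ≤ 1)
    (htree : (SimpleGraph.fromRel (fun i j => sG G (P i) (P j) = 1)).IsTree)
    (A : Set V) (hA : (G.induce A).Connected)
    (hnot : ¬ ∃ i, A ⊆ P i) :
    ∃ e, (G.induce A).IsBridge e :=
  bridge_of_not_in_one_part_general G k P hcover hs htree A hA hnot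
end

section
/- Let G_1, G_2 be graphs with V(G_1) ∩ V(G_2) = {v}, and suppose minrk_q(G_1 − v) = minrk_q(G_1) and minrk_q(G_2 − v) = minrk_q(G_2). Then minrk_q(G_1 ∪ G_2) = minrk_q(G_1) + minrk_q(G_2). -/
open scoped Classical

section Aux

open Matrix

variable {F : Type} [Field F]

lemma rank_submatrix_le'' {m n p q : Type} [Fintype m] [Fintype n] [Fintype p] [Fintype q]
    (A : Matrix m n F) (f : p → m) (g : q → n) :
    (A.submatrix f g).rank ≤ A.rank := by
  rw [Matrix.rank_eq_finrank_span_cols, Matrix.rank_eq_finrank_span_cols]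
  have hsub : Set.range (A.submatrix f g)ᵀ ⊆
      (LinearMap.funLeft F F f) '' (Set.range Aᵀ) := by
    rintro x ⟨j, rfl⟩
    exact ⟨Aᵀ (g j), ⟨g j, rfl⟩, rfl⟩
  have hle : Submodule.span F (Set.range (A.submatrix f g)ᵀ)
      ≤ (Submodule.span F (Set.range Aᵀ)).map (LinearMap.funLeft F F f) := by
    rw [Submodule.map_span]
    exact Submodule.span_mono hsub
  exact le_trans (Submodule.finrank_mono hle) (Submodule.finrank_map_le _ _)

lemma finrank_submodule_prod {M N : Type*} [AddCommGroup M] [AddCommGroup N]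
    [Module F M] [Module F N] [FiniteDimensional F M] [FiniteDimensional F N]
    (p : Submodule F M) (q : Submodule F N) :
    Module.finrank F (p.prod q) = Module.finrank F p + Module.finrank F q := by
  have e : (p.prod q) ≃ₗ[F] p × q :=
    { toFun := fun z => (⟨z.val.1, z.prop.1⟩, ⟨z.val.2, z.prop.2⟩)
      invFun := fun z => ⟨(z.1.val, z.2.val), ⟨z.1.prop, z.2.prop⟩⟩
      left_inv := fun z => rfl
      right_inv := fun z => rfl
      map_add' := fun x y => rfl
      map_smul' := fun c x => rfl }
  rw [e.finrank_eq, Module.finrank_prod]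

lemma rank_fromBlocks_diag {m n : Type} [Fintype m] [Fintype n]
    (A : Matrix m m F) (B : Matrix n n F) :
    (Matrix.fromBlocks A 0 0 B).rank = A.rank + B.rank := by
  set e := LinearEquiv.sumArrowLequivProdArrow m n F F with he
  have key : (Matrix.fromBlocks A 0 0 B).mulVecLin
      = e.symm.toLinearMap ∘ₗ ((A.mulVecLin.prodMap B.mulVecLin) ∘ₗ e.toLinearMap) := by
    apply LinearMap.ext; intro x
    funext i
    cases i with
    | inl i =>
        simp [Matrix.mulVecLin_apply, Matrix.fromBlocks_mulVec, he,
          LinearEquiv.sumArrowLequivProdArrow, Equiv.sumArrowEquivProdArrow]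
    | inr i =>
        simp [Matrix.mulVecLin_apply, Matrix.fromBlocks_mulVec, he,
          LinearEquiv.sumArrowLequivProdArrow, Equiv.sumArrowEquivProdArrow]
  have hrange : LinearMap.range ((A.mulVecLin.prodMap B.mulVecLin) ∘ₗ e.toLinearMap)
      = LinearMap.range (A.mulVecLin.prodMap B.mulVecLin) :=
    LinearMap.range_comp_of_range_eq_top _ (LinearMap.range_eq_top.2 e.surjective)
  have hprod : LinearMap.range (A.mulVecLin.prodMap B.mulVecLin)
      = (LinearMap.range A.mulVecLin).prod (LinearMap.range B.mulVecLin) := by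
    ext z
    simp only [LinearMap.mem_range, Submodule.mem_prod]
    constructor
    · rintro ⟨⟨x, y⟩, h⟩
      exact ⟨⟨x, congrArg Prod.fst h⟩, ⟨y, congrArg Prod.snd h⟩⟩
    · rintro ⟨⟨x, hx⟩, ⟨y, hy⟩⟩
      exact ⟨(x, y), Prod.ext hx hy⟩
  rw [Matrix.rank, key, LinearMap.range_comp, hrange, hprod,
    LinearEquiv.finrank_map_eq, finrank_submodule_prod, Matrix.rank, Matrix.rank]

variable {V : Type} [Fintype V]

lemma exists_fits_rank_minrk (G : SimpleGraph V) :
    ∃ M : Matrix V V F, Fits G M ∧ M.rank = minrk F G := by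
  have hne : {r : ℕ | ∃ M : Matrix V V F, Fits G M ∧ M.rank = r}.Nonempty := by
    refine ⟨(1 : Matrix V V F).rank, 1, ⟨?_, ?_⟩, rfl⟩
    · intro u; simp [Matrix.one_apply]
    · intro u w h _; simp [Matrix.one_apply, h]
  exact Nat.sInf_mem hne

lemma minrk_le_of_fits {G : SimpleGraph V} {M : Matrix V V F} (h : Fits G M) :
    minrk F G ≤ M.rank :=
  Nat.sInf_le ⟨M, h, rfl⟩

lemma fits_induce {G : SimpleGraph V} {M : Matrix V V F} (hM : Fits G M) (S : Set V) :
    Fits (G.induce S) (M.submatrix (Subtype.val) (Subtype.val) : Matrix S S F) := by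
  constructor
  · intro u; exact hM.1 u
  · intro u w huw hadj
    refine hM.2 u.val w.val (fun h => huw (Subtype.ext h)) (fun h => hadj ?_)
    simpa using h

end Aux

theorem minrk_union_one_common_vertex_no_drop {V F : Type} [Fintype V] [Field F] [Fintype F]
    (G : SimpleGraph V) (S1 S2 : Set V) (v : V)
    (hcap : S1 ∩ S2 = {v}) (hcup : S1 ∪ S2 = Set.univ)
    (hedges : ∀ a b, G.Adj a b → (a ∈ S1 ∧ b ∈ S1) ∨ (a ∈ S2 ∧ b ∈ S2))
    (h1 : minrk F (G.induce (S1 \ {v})) = minrk F (G.induce S1))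
    (h2 : minrk F (G.induce (S2 \ {v})) = minrk F (G.induce S2)) :
    minrk F G = minrk F (G.induce S1) + minrk F (G.induce S2) := by
  have hv1 : v ∈ S1 := by
    have : v ∈ S1 ∩ S2 := by rw [hcap]; exact rfl
    exact this.1
  have hv2 : v ∈ S2 := by
    have : v ∈ S1 ∩ S2 := by rw [hcap]; exact rfl
    exact this.2
  have hmem_v : ∀ x, x ∈ S1 → x ∈ S2 → x = v := by
    intro x hx1 hx2
    have : x ∈ S1 ∩ S2 := ⟨hx1, hx2⟩
    rwa [hcap] at this
  have hcompl : S1ᶜ = S2 \ {v} := by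
    ext x
    constructor
    · intro hx
      have hx2 : x ∈ S2 := by
        have : x ∈ S1 ∪ S2 := by rw [hcup]; trivial
        exact this.resolve_left hx
      refine ⟨hx2, ?_⟩
      intro hxv
      rw [Set.mem_singleton_iff] at hxv
      exact hx (by rw [hxv]; exact hv1)
    · rintro ⟨hx2, hxv⟩ 
      intro hx1
      exact hxv (hmem_v x hx1 hx2)
  -- Lower bound
  have hlow : minrk F (G.induce S1) + minrk F (G.induce S2) ≤ minrk F G := by
    obtain ⟨M, hM, hrk⟩ := exists_fits_rank_minrk (F := F) G
    set A : Matrix (S1 \ {v} : Set V) (S1 \ {v} : Set V) F :=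
      M.submatrix Subtype.val Subtype.val with hA
    set B : Matrix (S2 \ {v} : Set V) (S2 \ {v} : Set V) F :=
      M.submatrix Subtype.val Subtype.val with hB
    have hfitsA : Fits (G.induce (S1 \ {v})) A := fits_induce hM _
    have hfitsB : Fits (G.induce (S2 \ {v})) B := fits_induce hM _
    have hzero : ∀ (i : (S1 \ {v} : Set V)) (j : (S2 \ {v} : Set V)),
        M i.val j.val = 0 ∧ M j.val i.val = 0 := by
      intro i j
      have hne : i.val ≠ j.val := by
        intro h
        have : i.val = v := hmem_v i.val i.prop.1 (h ▸ j.prop.1)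
        exact i.prop.2 this
      have hnadj : ¬ G.Adj i.val j.val := by
        intro h
        rcases hedges _ _ h with ⟨_, hb⟩ | ⟨ha, _⟩
        · exact j.prop.2 (hmem_v j.val hb j.prop.1)
        · exact i.prop.2 (hmem_v i.val i.prop.1 ha)
      exact ⟨hM.2 _ _ hne hnadj, hM.2 _ _ (Ne.symm hne) fun h => hnadj h.symm⟩
    set ι : ((S1 \ {v} : Set V) ⊕ (S2 \ {v} : Set V)) → V :=
      Sum.elim Subtype.val Subtype.val with hι
    have hC : M.submatrix ι ι = Matrix.fromBlocks A 0 0 B := by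
      ext i j
      cases i with
      | inl i => cases j with
        | inl j => rfl
        | inr j => exact (hzero i j).1
      | inr i => cases j with
        | inl j => exact (hzero j i).2
        | inr j => rfl
    have hrankC : (M.submatrix ι ι).rank = A.rank + B.rank := by
      rw [hC, rank_fromBlocks_diag]
    have hAr : minrk F (G.induce S1) ≤ A.rank := h1 ▸ minrk_le_of_fits hfitsA
    have hBr : minrk F (G.induce S2) ≤ B.rank := h2 ▸ minrk_le_of_fits hfitsB
    calc minrk F (G.induce S1) + minrk F (G.induce S2) ≤ A.rank + B.rank :=
          add_le_add hAr hBr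
      _ = (M.submatrix ι ι).rank := hrankC.symm
      _ ≤ M.rank := rank_submatrix_le'' M ι ι
      _ = minrk F G := hrk
  -- Upper bound
  have hup : minrk F G ≤ minrk F (G.induce S1) + minrk F (G.induce S2) := by
    obtain ⟨M1, hM1, hrk1⟩ := exists_fits_rank_minrk (F := F) (G.induce S1)
    obtain ⟨M2, hM2, hrk2⟩ := exists_fits_rank_minrk (F := F) (G.induce S2)
    have hmem2 : ∀ x : (S1ᶜ : Set V), x.val ∈ S2 := by
      intro x
      have h := x.prop
      have h2 : (x : V) ∈ S2 \ {v} := by rw [← hcompl]; exact h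
      exact h2.1
    set g : (S1ᶜ : Set V) → (S2 : Set V) := fun x => ⟨x.val, hmem2 x⟩ with hg
    set B : Matrix (S1ᶜ : Set V) (S1ᶜ : Set V) F := M2.submatrix g g with hB
    set e : (S1 : Set V) ⊕ (S1ᶜ : Set V) ≃ V := Equiv.Set.sumCompl S1 with he
    set N : Matrix V V F := (Matrix.fromBlocks M1 0 0 B).submatrix e.symm e.symm with hN
    have happ : ∀ x y : V, N x y = Matrix.fromBlocks M1 0 0 B (e.symm x) (e.symm y) := by
      intro x y; rfl
    have hesymm_mem : ∀ (x : V) (hx : x ∈ S1), e.symm x = Sum.inl ⟨x, hx⟩ := by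
      intro x hx; exact Equiv.Set.sumCompl_symm_apply_of_mem hx
    have hesymm_not : ∀ (x : V) (hx : x ∉ S1), e.symm x = Sum.inr ⟨x, hx⟩ := by
      intro x hx; exact Equiv.Set.sumCompl_symm_apply_of_notMem hx
    have hfitsN : Fits G N := by
      constructor
      · intro u
        rw [happ]
        by_cases hu : u ∈ S1
        · rw [hesymm_mem u hu]
          exact hM1.1 ⟨u, hu⟩
        · rw [hesymm_not u hu]
          exact hM2.1 (g ⟨u, hu⟩)
      · intro x y hxy hnadj
        rw [happ]
        by_cases hx : x ∈ S1 <;> by_cases hy : y ∈ S1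
        · rw [hesymm_mem x hx, hesymm_mem y hy]
          refine hM1.2 ⟨x, hx⟩ ⟨y, hy⟩ (fun h => hxy (congrArg Subtype.val h)) ?_
          simpa using hnadj
        · rw [hesymm_mem x hx, hesymm_not y hy]
          rfl
        · rw [hesymm_not x hx, hesymm_mem y hy]
          rfl
        · rw [hesymm_not x hx, hesymm_not y hy]
          refine hM2.2 (g ⟨x, hx⟩) (g ⟨y, hy⟩) (fun h => hxy (congrArg Subtype.val h)) ?_
          simpa using hnadj
    have hrankN : N.rank ≤ minrk F (G.induce S1) + minrk F (G.induce S2) := by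
      have h1' : N.rank = M1.rank + B.rank := by
        rw [hN, Matrix.rank_submatrix, rank_fromBlocks_diag]
      have h2' : B.rank ≤ M2.rank := rank_submatrix_le'' M2 g g
      rw [h1', ← hrk1, ← hrk2]
      exact add_le_add le_rfl h2'
    exact le_trans (minrk_le_of_fits hfitsN) hrankN
  exact le_antisymm hup hlow
end
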